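/- arXiv:2106.05041 — 4 statements merged into one kernel-verified Lean document; each statement's English description precedes it below -/
import Mathlib

section
/- For every fPCL formula ζ over a finite set of ports P, every De Morgan algebra K, and every γ ∈ fC(P,K), the closure operator satisfies ‖~ζ‖(γ) = ⋁_{γ' ⊆ γ, γ' nonempty} ‖ζ‖(γ'). -/
/-- A De Morgan algebra: a bounded distributive lattice equipped with a
complement map satisfying involution and the De Morgan laws. -/
class DeMorganAlg (K : Type) extends DistribLattice K, BoundedOrder K where
  compl : K → K
  compl_compl : ∀ k : K, compl (compl k) = k
  compl_sup : ∀ k k' : K, compl (k ⊔ k') = compl k ⊓ compl k'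
  compl_inf : ∀ k k' : K, compl (k ⊓ k') = compl k ⊔ compl k'

/-- fPIL formulas over the set of ports `P`. -/
inductive fPIL (P : Type) : Type where
  | tt : fPIL P
  | port : P → fPIL P
  | fnot : fPIL P → fPIL P
  | fdisj : fPIL P → fPIL P → fPIL P

/-- Fuzzy conjunction of fPIL formulas. -/
def fPIL.fconj {P : Type} (φ₁ φ₂ : fPIL P) : fPIL P :=
  .fnot (.fdisj (.fnot φ₁) (.fnot φ₂))

/-- The fPIL formula `false`. -/
def fPIL.ff {P : Type} : fPIL P := .fnot .tt

/-- K-fuzzy interactions on `P`: maps `a : P → K` with `a p ≠ 0` for some port `p`. -/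
def fI (P K : Type) [DeMorganAlg K] : Type := {a : P → K // ∃ p : P, a p ≠ ⊥}

/-- Semantics of fPIL formulas. -/
def fPIL.sem {P K : Type} [DeMorganAlg K] : fPIL P → fI P K → K
  | .tt, _ => ⊤
  | .port p, a => a.1 p
  | .fnot φ, a => DeMorganAlg.compl (φ.sem a)
  | .fdisj φ₁ φ₂, a => φ₁.sem a ⊔ φ₂.sem a

/-- Equivalence of fPIL formulas: equal semantics over every De Morgan algebra
and every fuzzy interaction. -/
def pilEquiv {P : Type} (φ₁ φ₂ : fPIL P) : Prop :=
  ∀ (K : Type) [DeMorganAlg K] (a : fI P K), φ₁.sem a = φ₂.sem a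
noncomputable instance {P K : Type} [DeMorganAlg K] : DecidableEq (fI P K) :=
  Classical.decEq _

/-- fPCL formulas over the set of ports `P`. -/
inductive fPCL (P : Type) : Type where
  | pil : fPIL P → fPCL P
  | cneg : fPCL P → fPCL P
  | oplus : fPCL P → fPCL P → fPCL P
  | coal : fPCL P → fPCL P → fPCL P

/-- Fuzzy conjunction `⊗` of fPCL formulas. -/
def fPCL.otimes {P : Type} (ζ₁ ζ₂ : fPCL P) : fPCL P :=
  .cneg (.oplus (.cneg ζ₁) (.cneg ζ₂))

/-- The closure operator `~ζ := ζ ⊎ true`. -/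
def fPCL.closure {P : Type} (ζ : fPCL P) : fPCL P := .coal ζ (.pil .tt)

/-- Semantics of fPCL formulas on finite sets of fuzzy interactions. -/
noncomputable def fPCL.sem {P K : Type} [DeMorganAlg K] :
    fPCL P → Finset (fI P K) → K
  | .pil φ, γ => γ.inf fun a => φ.sem a
  | .cneg ζ, γ => DeMorganAlg.compl (ζ.sem γ)
  | .oplus ζ₁ ζ₂, γ => ζ₁.sem γ ⊔ ζ₂.sem γ
  | .coal ζ₁ ζ₂, γ =>
      ((γ.powerset ×ˢ γ.powerset).filter fun q =>
          q.1.Nonempty ∧ q.2.Nonempty ∧ q.1 ∪ q.2 = γ).sup fun q =>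
        ζ₁.sem q.1 ⊓ ζ₂.sem q.2

/-- Equivalence of fPCL formulas: equal semantics over every De Morgan algebra
and every nonempty finite set of fuzzy interactions. -/
def pclEquiv {P : Type} (ζ₁ ζ₂ : fPCL P) : Prop :=
  ∀ (K : Type) [DeMorganAlg K] (γ : Finset (fI P K)), γ.Nonempty →
    ζ₁.sem γ = ζ₂.sem γ

namespace Finset

variable {α : Type*} [DecidableEq α]

def nonemptyCovers (γ : Finset α) : Finset (Finset α × Finset α) :=
  (γ.powerset ×ˢ γ.powerset).filter fun q => q.1.Nonempty ∧ q.2.Nonempty ∧ q.1 ∪ q.2 = γ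

theorem mem_nonemptyCovers {γ : Finset α} {q : Finset α × Finset α} :
    q ∈ nonemptyCovers γ ↔ q.1 ⊆ γ ∧ q.2 ⊆ γ ∧ q.1.Nonempty ∧ q.2.Nonempty ∧ q.1 ∪ q.2 = γ := by
  simp [nonemptyCovers, and_assoc]

/-- Every nonempty `γ' ⊆ γ` is the first component of the cover `(γ', γ)`. -/
theorem image_fst_nonemptyCovers (γ : Finset α) :
    (nonemptyCovers γ).image Prod.fst = γ.powerset.filter fun γ' => γ'.Nonempty := by
  ext γ'
  simp only [mem_image, mem_nonemptyCovers, mem_filter, mem_powerset, Prod.exists]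
  constructor
  · rintro ⟨_, _, ⟨hsub, -, hne, -⟩, rfl⟩
    exact ⟨hsub, hne⟩
  · rintro ⟨hsub, hne⟩
    exact ⟨γ', γ, ⟨hsub, subset_rfl, hne, hne.mono hsub, union_eq_right.2 hsub⟩, rfl⟩

end Finset

namespace fPCL

variable {P K : Type} [DeMorganAlg K]

theorem sem_pil_tt (γ : Finset (fI P K)) : (pil .tt : fPCL P).sem γ = ⊤ :=
  Finset.inf_top γ

theorem sem_coal (ζ₁ ζ₂ : fPCL P) (γ : Finset (fI P K)) :
    (coal ζ₁ ζ₂).sem γ = γ.nonemptyCovers.sup fun q => ζ₁.sem q.1 ⊓ ζ₂.sem q.2 := by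
  rw [sem]
  rfl

theorem sem_closure (ζ : fPCL P) (γ : Finset (fI P K)) :
    ζ.closure.sem γ = γ.nonemptyCovers.sup fun q => ζ.sem q.1 := by
  simp only [closure, sem_coal, sem_pil_tt, inf_top_eq]

end fPCL

theorem fpcl_closure_sem_general {P : Type} (ζ : fPCL P)
    (K : Type) [DeMorganAlg K] (γ : Finset (fI P K)) :
    (fPCL.sem ζ.closure γ) =
      (γ.powerset.filter fun γ' => γ'.Nonempty).sup fun γ' => ζ.sem γ' := by
  rw [fPCL.sem_closure, ← Finset.image_fst_nonemptyCovers, Finset.sup_image]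
  rfl

/-- the closure operator satisfies
`‖~ζ‖(γ) = ⋁_{γ' ⊆ γ, γ' nonempty} ‖ζ‖(γ')`. -/
theorem fpcl_closure_sem {P : Type} [Fintype P] (ζ : fPCL P)
    (K : Type) [DeMorganAlg K] (γ : Finset (fI P K)) (hγ : γ.Nonempty) :
    (fPCL.sem ζ.closure γ) =
      (γ.powerset.filter fun γ' => γ'.Nonempty).sup fun γ' => ζ.sem γ' :=
  fpcl_closure_sem_general ζ K γ
end

section
/- For every fPIL formula φ and all fPCL formulas ζ₁, ζ₂ over a finite set of ports P, the fuzzy conjunction with φ distributes over the coalescing operator: φ ⊗ (ζ₁ ⊎ ζ₂) ≡ (φ ⊗ ζ₁) ⊎ (φ ⊗ ζ₂). -/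
/-! Semantically `ψ ⊗ ζ` is the meet `‖ψ‖ ⊓ ‖ζ‖`, and the value of an fPIL formula on a
set of interactions is a meet over its elements, so it turns unions into meets. Hence for a
cover `γ = γ₁ ∪ γ₂` the factor `‖φ‖(γ)` splits as `‖φ‖(γ₁) ⊓ ‖φ‖(γ₂)`, and distributivity
moves it inside the join defining `⊎`. -/

namespace fPCL

variable {P K : Type} [DeMorganAlg K]

theorem sem_otimes (ζ₁ ζ₂ : fPCL P) (γ : Finset (fI P K)) :
    (ζ₁.otimes ζ₂).sem γ = ζ₁.sem γ ⊓ ζ₂.sem γ := by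
  simp only [otimes, sem, DeMorganAlg.compl_sup, DeMorganAlg.compl_compl]

theorem sem_pil_union (φ : fPIL P) (s t : Finset (fI P K)) :
    (pil φ).sem (s ∪ t) = (pil φ).sem s ⊓ (pil φ).sem t :=
  Finset.inf_union

theorem sem_otimes_coal_of_sem_union {ψ : fPCL P}
    (hψ : ∀ s t : Finset (fI P K), ψ.sem (s ∪ t) = ψ.sem s ⊓ ψ.sem t)
    (ζ₁ ζ₂ : fPCL P) (γ : Finset (fI P K)) :
    (ψ.otimes (coal ζ₁ ζ₂)).sem γ = (coal (ψ.otimes ζ₁) (ψ.otimes ζ₂)).sem γ := by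
  rw [sem_otimes]
  simp only [sem, Finset.sup_inf_distrib_left]
  refine Finset.sup_congr rfl fun q hq => ?_
  obtain ⟨-, -, -, hcover⟩ := Finset.mem_filter.mp hq
  rw [sem_otimes, sem_otimes, ← hcover, hψ]
  ac_rfl

end fPCL

theorem fpil_otimes_distrib_coal_general {P : Type} (φ : fPIL P) (ζ₁ ζ₂ : fPCL P) :
    pclEquiv ((fPCL.pil φ).otimes (.coal ζ₁ ζ₂))
      (.coal ((fPCL.pil φ).otimes ζ₁) ((fPCL.pil φ).otimes ζ₂)) :=
  fun _ _ γ _ => fPCL.sem_otimes_coal_of_sem_union (fPCL.sem_pil_union φ) ζ₁ ζ₂ γ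

/-- for an fPIL formula `φ`, fuzzy conjunction with `φ` distributes
over the coalescing operator: `φ ⊗ (ζ₁ ⊎ ζ₂) ≡ (φ ⊗ ζ₁) ⊎ (φ ⊗ ζ₂)`. -/
theorem fpil_otimes_distrib_coal {P : Type} [Fintype P] (φ : fPIL P) (ζ₁ ζ₂ : fPCL P) :
    pclEquiv ((fPCL.pil φ).otimes (.coal ζ₁ ζ₂))
      (.coal ((fPCL.pil φ).otimes ζ₁) ((fPCL.pil φ).otimes ζ₂)) :=
  fpil_otimes_distrib_coal_general φ ζ₁ ζ₂
end

section
/- Let J be a finite nonempty index set, φ_j an fPIL formula over a finite set of ports P for each j ∈ J, K a De Morgan algebra, and γ ∈ fC(P,K). Then ‖⋁f_{j∈J} φ_j‖(γ) = ⋁_{J' ⊆ J} ⋁ (⋀_{j'∈J'} ‖φ_{j'}‖(γ_{j'})), where the inner join ranges over all families (γ_{j'})_{j'∈J'} of pairwise disjoint nonempty subsets of γ whose (disjoint) union equals γ. -/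
/-- Iterated fuzzy disjunction `⋁f_{j∈Fin (n+1)} φ j` of fPIL formulas over the
finite nonempty index set `Fin (n+1)`. -/
def fPIL.bigDisj {P : Type} : (n : ℕ) → (Fin (n + 1) → fPIL P) → fPIL P
  | 0, φ => φ 0
  | n + 1, φ => .fdisj (fPIL.bigDisj n fun i => φ i.castSucc) (φ (Fin.last (n + 1)))

/-- Iterated fuzzy conjunction `⋀f_{j∈Fin (n+1)} φ j` of fPIL formulas. -/
def fPIL.bigConj {P : Type} : (n : ℕ) → (Fin (n + 1) → fPIL P) → fPIL P
  | 0, φ => φ 0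
  | n + 1, φ => fPIL.fconj (fPIL.bigConj n fun i => φ i.castSucc) (φ (Fin.last (n + 1)))

/-- Iterated coalescing `⊎_{j∈Fin (n+1)} ζ j` of fPCL formulas. -/
def fPCL.bigCoal {P : Type} : (n : ℕ) → (Fin (n + 1) → fPCL P) → fPCL P
  | 0, ζ => ζ 0
  | n + 1, ζ => .coal (fPCL.bigCoal n fun i => ζ i.castSucc) (ζ (Fin.last (n + 1)))

/-- Iterated fuzzy conjunction `⊗_{j∈Fin (n+1)} ζ j` of fPCL formulas. -/
def fPCL.bigOtimes {P : Type} : (n : ℕ) → (Fin (n + 1) → fPCL P) → fPCL P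
  | 0, ζ => ζ 0
  | n + 1, ζ => (fPCL.bigOtimes n fun i => ζ i.castSucc).otimes (ζ (Fin.last (n + 1)))

/-- Iterated fuzzy disjunction `⊕_{j∈Fin (n+1)} ζ j` of fPCL formulas. -/
def fPCL.bigOplus {P : Type} : (n : ℕ) → (Fin (n + 1) → fPCL P) → fPCL P
  | 0, ζ => ζ 0
  | n + 1, ζ => .oplus (fPCL.bigOplus n fun i => ζ i.castSucc) (ζ (Fin.last (n + 1)))

/- The left-hand side is `⋀_{a∈γ} ⋁_j ‖φ_j‖(a)`. Distributing the meet over the joins turns it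
into a join, over all choices `a ↦ c a` of a disjunct for each interaction, of
`⋀_{a∈γ} ‖φ_{c a}‖(a)`, and grouping the interactions by the fibres of `c` makes this the term of
the partition of `γ` into the nonempty fibres of `c`. Conversely, every term of the right-hand
side lies below `‖φ_j‖(a)` for the block `γ_j` containing `a`. -/

namespace Finset

variable {α ι L : Type*}

def IsIndexedPartition [DecidableEq α] (J : Finset ι) (g : ι → Finset α) (γ : Finset α) : Prop :=
  (∀ j ∈ J, (g j).Nonempty) ∧ (∀ j ∈ J, ∀ j' ∈ J, j ≠ j' → g j ∩ g j' = ∅) ∧ J.sup g = γ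

instance [DecidableEq α] [DecidableEq ι] (J : Finset ι) (γ : Finset α) :
    DecidablePred fun g : ι → Finset α => IsIndexedPartition J g γ :=
  fun _ => inferInstanceAs (Decidable (_ ∧ _ ∧ _))

theorem isIndexedPartition_image_fiber [DecidableEq α] [DecidableEq ι] (γ : Finset α)
    (c : α → ι) : IsIndexedPartition (γ.image c) (fun j => γ.filter (c · = j)) γ := by
  refine ⟨?_, ?_, ?_⟩
  · intro j hj
    obtain ⟨a, ha, rfl⟩ := mem_image.1 hj
    exact ⟨a, mem_filter.2 ⟨ha, rfl⟩⟩
  · intro j _ j' _ hne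
    ext a
    simp only [mem_inter, mem_filter, notMem_empty, iff_false]
    rintro ⟨⟨-, rfl⟩, -, rfl⟩
    exact hne rfl
  · simpa only [sup_eq_biUnion] using image_biUnion_filter_eq γ c

theorem inf_inf_le_inf_sup [DecidableEq α] [Lattice L] [BoundedOrder L] {J : Finset ι}
    {g : ι → Finset α} {γ : Finset α} (hγ : γ ⊆ J.sup g) (f : ι → α → L) :
    (J.inf fun j => (g j).inf (f j)) ≤ γ.inf fun a => J.sup fun j => f j a := by
  refine Finset.le_inf fun a ha => ?_
  obtain ⟨j, hj, haj⟩ := mem_sup.1 (hγ ha)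
  calc (J.inf fun j => (g j).inf (f j)) ≤ (g j).inf (f j) := inf_le hj
    _ ≤ f j a := inf_le haj
    _ ≤ J.sup fun j => f j a := le_sup (f := fun j => f j a) hj

theorem inf_comp_le_inf_image_inf_fiber [SemilatticeInf L] [OrderTop L] [DecidableEq ι]
    (γ : Finset α) (c : α → ι) (f : ι → α → L) :
    (γ.inf fun a => f (c a) a) ≤ (γ.image c).inf fun j => (γ.filter (c · = j)).inf (f j) := by
  refine Finset.le_inf fun j _ => Finset.le_inf fun a ha => ?_
  obtain ⟨haγ, rfl⟩ := mem_filter.1 ha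
  exact inf_le (f := fun a => f (c a) a) haγ

variable [DistribLattice L] [BoundedOrder L] [DecidableEq α] [Fintype ι] [DecidableEq ι]

theorem inf_sup_eq_sup_isIndexedPartition [Nonempty ι] (γ : Finset α) (f : ι → α → L) :
    (γ.inf fun a => univ.sup fun j => f j a) =
      univ.powerset.sup fun J =>
        ((Fintype.piFinset fun _ : ι => γ.powerset).filter (IsIndexedPartition J · γ)).sup
          fun g => J.inf fun j => (g j).inf (f j) := by
  set rhs := univ.powerset.sup fun J =>
    ((Fintype.piFinset fun _ : ι => γ.powerset).filter (IsIndexedPartition J · γ)).sup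
      fun g => J.inf fun j => (g j).inf (f j)
  have le_rhs {J : Finset ι} {g : ι → Finset α} (hsub : ∀ j, g j ⊆ γ)
      (hg : IsIndexedPartition J g γ) : (J.inf fun j => (g j).inf (f j)) ≤ rhs :=
    le_sup_of_le (mem_powerset.2 (subset_univ J)) <|
      Finset.le_sup (f := fun g => J.inf fun j => (g j).inf (f j)) <|
        mem_filter.2 ⟨Fintype.mem_piFinset.2 fun j => mem_powerset.2 (hsub j), hg⟩
  apply le_antisymm
  · rw [inf_sup]
    refine Finset.sup_le fun p _ => ?_
    let c : α → ι := fun a => if h : a ∈ γ then p a h else Classical.arbitrary ι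
    calc (γ.attach.inf fun a => f (p a a.2) a) = γ.inf fun a => f (c a) a := by
          rw [← inf_attach γ fun a => f (c a) a]
          exact inf_congr rfl fun a _ => by simp only [c, dif_pos a.2]
      _ ≤ _ := inf_comp_le_inf_image_inf_fiber γ c f
      _ ≤ rhs := le_rhs (fun _ => filter_subset _ _) (isIndexedPartition_image_fiber γ c)
  · refine Finset.sup_le fun J _ => Finset.sup_le fun g hg => ?_
    obtain ⟨-, -, -, hcover⟩ := mem_filter.1 hg
    calc (J.inf fun j => (g j).inf (f j)) ≤ γ.inf fun a => J.sup fun j => f j a :=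
          inf_inf_le_inf_sup hcover.ge f
      _ ≤ γ.inf fun a => univ.sup fun j => f j a :=
          inf_mono_fun fun a _ => sup_mono (subset_univ J)

end Finset

@[simp]
theorem fPCL.sem_pil {P K : Type} [DeMorganAlg K] (φ : fPIL P) (γ : Finset (fI P K)) :
    fPCL.sem (.pil φ) γ = γ.inf φ.sem :=
  rfl

@[simp]
theorem fPIL.sem_bigDisj {P K : Type} [DeMorganAlg K] :
    ∀ (n : ℕ) (φ : Fin (n + 1) → fPIL P) (a : fI P K),
      (fPIL.bigDisj n φ).sem a = Finset.univ.sup fun j => (φ j).sem a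
  | 0, φ, a => by simp [fPIL.bigDisj]
  | n + 1, φ, a => by
    rw [fPIL.bigDisj, fPIL.sem, fPIL.sem_bigDisj n]
    conv_rhs => rw [Fin.univ_castSuccEmb, Finset.sup_cons, Finset.sup_map]
    exact sup_comm _ _

theorem fpil_bigDisj_sem_general {P : Type} (n : ℕ) (φ : Fin (n + 1) → fPIL P)
    (K : Type) [DeMorganAlg K] (γ : Finset (fI P K)) :
    fPCL.sem (.pil (fPIL.bigDisj n φ)) γ =
      (Finset.univ : Finset (Fin (n + 1))).powerset.sup fun J' =>
        ((Fintype.piFinset fun _ : Fin (n + 1) => γ.powerset).filter fun g =>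
            (∀ j ∈ J', (g j).Nonempty) ∧
            (∀ j ∈ J', ∀ j' ∈ J', j ≠ j' → g j ∩ g j' = ∅) ∧
            J'.sup g = γ).sup fun g =>
          J'.inf fun j => fPCL.sem (.pil (φ j)) (g j) := by
  rw [fPCL.sem_pil, funext (fPIL.sem_bigDisj n φ)]
  convert Finset.inf_sup_eq_sup_isIndexedPartition γ fun j a => (φ j).sem a <;> rfl

/-- for a finite nonempty index set `J = Fin (n+1)`, fPIL formulas
`φ j`, a De Morgan algebra `K` and `γ ∈ fC(P,K)`,
`‖⋁f_{j∈J} φ_j‖(γ) = ⋁_{J' ⊆ J} ⋁ (⋀_{j'∈J'} ‖φ_{j'}‖(γ_{j'}))`, the inner join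
ranging over all families of pairwise disjoint nonempty subsets of `γ` whose
(disjoint) union equals `γ`. -/
theorem fpil_bigDisj_sem {P : Type} [Fintype P] (n : ℕ) (φ : Fin (n + 1) → fPIL P)
    (K : Type) [DeMorganAlg K] (γ : Finset (fI P K)) (hγ : γ.Nonempty) :
    fPCL.sem (.pil (fPIL.bigDisj n φ)) γ =
      (Finset.univ : Finset (Fin (n + 1))).powerset.sup fun J' =>
        ((Fintype.piFinset fun _ : Fin (n + 1) => γ.powerset).filter fun g =>
            (∀ j ∈ J', (g j).Nonempty) ∧
            (∀ j ∈ J', ∀ j' ∈ J', j ≠ j' → g j ∩ g j' = ∅) ∧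
            J'.sup g = γ).sup fun g =>
          J'.inf fun j => fPCL.sem (.pil (φ j)) (g j) :=
  fpil_bigDisj_sem_general n φ K γ
end

section
/- Let J be a finite nonempty index set and φ_j an fPIL formula over a finite set of ports P for each j ∈ J. Then ¬(⊎_{j∈J} φ_j) ≡ (⊕_{j∈J} !φ_j) ⊕ ~(⋀f_{j∈J} !φ_j) as fPCL formulas. -/
namespace DeMorganAlg

variable {K : Type} [DeMorganAlg K]

theorem compl_top : compl (⊤ : K) = ⊥ :=
  calc compl (⊤ : K) = compl (compl ⊥ ⊔ ⊤) := by rw [sup_top_eq]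
    _ = ⊥ := by rw [compl_sup, compl_compl, bot_inf_eq]

theorem compl_bot : compl (⊥ : K) = ⊤ := by
  rw [← compl_top, compl_compl]

theorem compl_finset_inf {ι : Type*} (s : Finset ι) (f : ι → K) :
    compl (s.inf f) = s.sup fun i => compl (f i) := by
  induction s using Finset.cons_induction with
  | empty => exact compl_top
  | cons a s _ ih => rw [Finset.inf_cons, Finset.sup_cons, compl_inf, ih]

theorem compl_finset_sup {ι : Type*} (s : Finset ι) (f : ι → K) :
    compl (s.sup f) = s.inf fun i => compl (f i) := by
  induction s using Finset.cons_induction with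
  | empty => exact compl_bot
  | cons a s _ ih => rw [Finset.inf_cons, Finset.sup_cons, compl_sup, ih]

end DeMorganAlg

theorem Fin.sup_univ_castSucc {α : Type*} [SemilatticeSup α] [OrderBot α] {n : ℕ}
    (f : Fin (n + 1) → α) :
    Finset.univ.sup f = (Finset.univ.sup fun i : Fin n => f i.castSucc) ⊔ f (Fin.last n) := by
  rw [Fin.univ_castSuccEmb, Finset.sup_cons, Finset.sup_map, sup_comm]
  rfl

theorem Fin.inf_univ_castSucc {α : Type*} [SemilatticeInf α] [OrderTop α] {n : ℕ}
    (f : Fin (n + 1) → α) :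
    Finset.univ.inf f = (Finset.univ.inf fun i : Fin n => f i.castSucc) ⊓ f (Fin.last n) :=
  Fin.sup_univ_castSucc (α := αᵒᵈ) f

namespace Finset

theorem inf_sup_le_of_forall_transversal {ι α β : Type*} [DecidableEq α]
    [DistribLattice β] [BoundedOrder β] (s : Finset ι) (S : ι → Finset α) (f : α → β) (c : β)
    (h : ∀ u : Finset α, (∀ i ∈ s, ∃ x ∈ S i, x ∈ u) → u.inf f ≤ c) :
    s.inf (fun i => (S i).sup f) ≤ c := by
  classical
  rw [inf_sup]
  refine Finset.sup_le fun g hg => ?_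
  rw [mem_pi] at hg
  refine (inf_image s.attach (fun i => g i.1 i.2) f).symm.trans_le (h _ fun i hi => ?_)
  exact ⟨g i hi, hg i hi, mem_image_of_mem _ (mem_attach _ ⟨i, hi⟩)⟩

variable {ι α : Type*} [Fintype ι] [DecidableEq ι] [DecidableEq α]

variable (ι) in
def coverings (γ : Finset α) : Finset (ι → Finset α) :=
  (Fintype.piFinset fun _ => γ.powerset).filter fun σ =>
    (∀ j, (σ j).Nonempty) ∧ univ.sup σ = γ

theorem mem_coverings {γ : Finset α} {σ : ι → Finset α} :
    σ ∈ γ.coverings ι ↔ (∀ j, (σ j).Nonempty) ∧ univ.sup σ = γ := by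
  simp only [coverings, mem_filter, Fintype.mem_piFinset, mem_powerset]
  exact ⟨And.right, fun h => ⟨fun j => h.2 ▸ le_sup (mem_univ j), h⟩⟩

theorem subset_of_mem_coverings {γ : Finset α} {σ : ι → Finset α} (hσ : σ ∈ γ.coverings ι)
    (j : ι) : σ j ⊆ γ :=
  (mem_coverings.1 hσ).2 ▸ le_sup (f := σ) (mem_univ j)

theorem coverings_of_unique [Unique ι] {γ : Finset α} (hγ : γ.Nonempty) :
    γ.coverings ι = {fun _ => γ} := by
  ext σ
  rw [mem_coverings, mem_singleton, univ_unique, sup_singleton]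
  constructor
  · rintro ⟨-, h⟩
    funext j
    rw [Unique.eq_default j, h]
  · rintro rfl
    exact ⟨fun _ => hγ, rfl⟩

theorem _root_.Fin.snoc_mem_coverings {n : ℕ} {γ₁ γ₂ γ : Finset α} {τ : Fin n → Finset α}
    (hτ : τ ∈ γ₁.coverings (Fin n)) (h₂ : γ₂.Nonempty) (h : γ₁ ∪ γ₂ = γ) :
    Fin.snoc (α := fun _ => Finset α) τ γ₂ ∈ γ.coverings (Fin (n + 1)) := by
  obtain ⟨hne, hsup⟩ := mem_coverings.1 hτ
  refine mem_coverings.2 ⟨Fin.lastCases (by simpa using h₂) fun i => by simpa using hne i, ?_⟩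
  rw [Fin.sup_univ_castSucc]
  simpa only [Fin.snoc_castSucc, Fin.snoc_last, hsup, sup_eq_union] using h

theorem exists_row_or_column_of_meets_coverings {γ : Finset α} {u : Finset (Σ _ : ι, α)}
    (hu : ∀ σ ∈ γ.coverings ι, ∃ x ∈ univ.sigma σ, x ∈ u) :
    (∃ j, ∀ a ∈ γ, ⟨j, a⟩ ∈ u) ∨ ∃ a ∈ γ, ∀ j, ⟨j, a⟩ ∈ u := by
  by_contra! h
  obtain ⟨hrow, hcol⟩ := h
  have hσ : (fun j => γ.filter fun a => ⟨j, a⟩ ∉ u) ∈ γ.coverings ι := by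
    refine mem_coverings.2 ⟨fun j => ?_, ?_⟩
    · obtain ⟨a, ha, hau⟩ := hrow j
      exact ⟨a, mem_filter.2 ⟨ha, hau⟩⟩
    · refine Subset.antisymm (Finset.sup_le fun j _ => filter_subset _ _) fun a ha => ?_
      obtain ⟨j, hj⟩ := hcol a ha
      exact mem_sup.2 ⟨j, mem_univ j, mem_filter.2 ⟨ha, hj⟩⟩
  obtain ⟨x, hx, hxu⟩ := hu _ hσ
  exact (mem_filter.1 (mem_sigma.1 hx).2).2 hxu

theorem inf_coverings_sup_eq {β : Type*} [DistribLattice β] [BoundedOrder β] (γ : Finset α)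
    (y : ι → α → β) :
    ((γ.coverings ι).inf fun σ => univ.sup fun j => (σ j).sup (y j)) =
      (univ.sup fun j => γ.inf (y j)) ⊔ γ.sup fun a => univ.inf fun j => y j a := by
  refine le_antisymm ?_ (Finset.le_inf fun σ hσ => ?_)
  · have hgraph : ∀ σ : ι → Finset α,
        (univ.sup fun j => (σ j).sup (y j)) = (univ.sigma σ).sup fun x => y x.1 x.2 :=
      fun σ => (sup_sigma univ σ fun x => y x.1 x.2).symm
    rw [inf_congr rfl fun σ _ => hgraph σ]
    refine inf_sup_le_of_forall_transversal _ _ _ _ fun u hu => ?_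
    rcases exists_row_or_column_of_meets_coverings hu with ⟨j, hj⟩ | ⟨a, ha, hcol⟩
    · exact le_sup_of_le_left <| le_sup_of_le (mem_univ j) <|
        Finset.le_inf fun a ha => inf_le (hj a ha)
    · exact le_sup_of_le_right <| le_sup_of_le ha <| Finset.le_inf fun j _ => inf_le (hcol j)
  · obtain ⟨hne, hsup⟩ := mem_coverings.1 hσ
    refine sup_le (Finset.sup_le fun j _ => ?_) (Finset.sup_le fun a ha => ?_)
    · obtain ⟨a, ha⟩ := hne j
      exact (inf_le (subset_of_mem_coverings hσ j ha)).trans (le_sup_of_le (mem_univ j) (le_sup ha))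
    · obtain ⟨j, -, hj⟩ := mem_sup.1 (hsup.symm ▸ ha : a ∈ univ.sup σ)
      exact (inf_le (mem_univ j)).trans (le_sup_of_le (mem_univ j) (le_sup hj))

end Finset

open Finset

namespace fPIL

variable {P K : Type} [DeMorganAlg K]

theorem sem_fconj (φ₁ φ₂ : fPIL P) (a : fI P K) : (φ₁.fconj φ₂).sem a = φ₁.sem a ⊓ φ₂.sem a := by
  simp only [fconj, sem, DeMorganAlg.compl_sup, DeMorganAlg.compl_compl]

theorem sem_bigConj (n : ℕ) (φ : Fin (n + 1) → fPIL P) (a : fI P K) :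
    (bigConj n φ).sem a = univ.inf fun j => (φ j).sem a := by
  induction n with
  | zero => simp [bigConj]
  | succ n ih => rw [bigConj, sem_fconj, ih, Fin.inf_univ_castSucc (fun j => (φ j).sem a)]

end fPIL

namespace fPCL

variable {P K : Type} [DeMorganAlg K]

theorem sem_bigOplus (n : ℕ) (ζ : Fin (n + 1) → fPCL P) (γ : Finset (fI P K)) :
    (bigOplus n ζ).sem γ = univ.sup fun j => (ζ j).sem γ := by
  induction n with
  | zero => simp [bigOplus]
  | succ n ih => rw [bigOplus, sem, ih, Fin.sup_univ_castSucc (fun j => (ζ j).sem γ)]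

theorem sem_coal_le_iff {ζ₁ ζ₂ : fPCL P} {γ : Finset (fI P K)} {c : K} :
    (coal ζ₁ ζ₂).sem γ ≤ c ↔ ∀ γ₁ γ₂ : Finset (fI P K),
      γ₁.Nonempty → γ₂.Nonempty → γ₁ ∪ γ₂ = γ → ζ₁.sem γ₁ ⊓ ζ₂.sem γ₂ ≤ c := by
  simp only [sem, Finset.sup_le_iff, mem_filter, mem_product, mem_powerset, Prod.forall, and_imp]
  refine ⟨fun h γ₁ γ₂ h₁ h₂ hu => ?_, fun h γ₁ γ₂ _ _ => h γ₁ γ₂⟩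
  exact h γ₁ γ₂ (hu ▸ subset_union_left) (hu ▸ subset_union_right) h₁ h₂ hu

theorem le_sem_coal {ζ₁ ζ₂ : fPCL P} {γ₁ γ₂ γ : Finset (fI P K)} (h₁ : γ₁.Nonempty)
    (h₂ : γ₂.Nonempty) (hu : γ₁ ∪ γ₂ = γ) : ζ₁.sem γ₁ ⊓ ζ₂.sem γ₂ ≤ (coal ζ₁ ζ₂).sem γ :=
  sem_coal_le_iff.1 le_rfl γ₁ γ₂ h₁ h₂ hu

theorem sem_closure_pil (ψ : fPIL P) {γ : Finset (fI P K)} (hγ : γ.Nonempty) :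
    (closure (pil ψ)).sem γ = γ.sup fun a => ψ.sem a := by
  refine le_antisymm (sem_coal_le_iff.2 fun γ₁ γ₂ ⟨a, ha⟩ _ hu => ?_) (Finset.sup_le fun a ha => ?_)
  · exact inf_le_left.trans ((inf_le ha).trans (le_sup (hu ▸ mem_union_left _ ha)))
  · refine le_trans ?_ (le_sem_coal (singleton_nonempty a) hγ
      (union_eq_right.2 (singleton_subset_iff.2 ha)))
    simp only [sem, fPIL.sem, inf_singleton, inf_top, inf_top_eq, le_rfl]

theorem sem_bigCoal (n : ℕ) (ζ : Fin (n + 1) → fPCL P) {γ : Finset (fI P K)}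
    (hγ : γ.Nonempty) :
    (bigCoal n ζ).sem γ =
      (γ.coverings (Fin (n + 1))).sup fun σ => univ.inf fun j => (ζ j).sem (σ j) := by
  induction n generalizing γ with
  | zero => simp [bigCoal, coverings_of_unique hγ]
  | succ n ih =>
    refine le_antisymm (sem_coal_le_iff.2 fun γ₁ γ₂ h₁ h₂ hu => ?_) (Finset.sup_le fun σ hσ => ?_)
    · rw [ih _ h₁, sup_inf_distrib_right]
      refine Finset.sup_le fun τ hτ => le_sup_of_le (Fin.snoc_mem_coverings hτ h₂ hu) ?_
      rw [Fin.inf_univ_castSucc fun j =>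
        (ζ j).sem (Fin.snoc (α := fun _ => Finset (fI P K)) τ γ₂ j)]
      simp only [Fin.snoc_castSucc, Fin.snoc_last, le_rfl]
    · obtain ⟨hne, hsup⟩ := mem_coverings.1 hσ
      have hinit : Fin.init σ ∈ (univ.sup (Fin.init σ)).coverings (Fin (n + 1)) :=
        mem_coverings.2 ⟨fun i => hne _, rfl⟩
      have hinit_ne : (univ.sup (Fin.init σ)).Nonempty :=
        (hne (Fin.castSucc 0)).mono (le_sup (f := Fin.init σ) (mem_univ 0))
      have hunion : univ.sup (Fin.init σ) ∪ σ (Fin.last (n + 1)) = γ := by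
        rw [← hsup, Fin.sup_univ_castSucc σ, sup_eq_union]
        rfl
      rw [Fin.inf_univ_castSucc]
      refine le_trans (inf_le_inf_right _ ?_) (le_sem_coal hinit_ne (hne _) hunion)
      rw [ih _ hinit_ne]
      exact le_sup (f := fun τ => univ.inf fun j => (ζ j.castSucc).sem (τ j)) hinit

end fPCL

theorem fpcl_neg_bigCoal_general {P : Type} (n : ℕ) (φ : Fin (n + 1) → fPIL P) :
    pclEquiv (.cneg (fPCL.bigCoal n fun j => .pil (φ j)))
      (.oplus (fPCL.bigOplus n fun j => .pil (.fnot (φ j)))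
        (fPCL.closure (.pil (fPIL.bigConj n fun j => .fnot (φ j))))) := by
  intro K _ γ hγ
  have lhs : (fPCL.cneg (fPCL.bigCoal n fun j => .pil (φ j))).sem γ =
      (γ.coverings (Fin (n + 1))).inf fun σ =>
        univ.sup fun j => (σ j).sup fun a => DeMorganAlg.compl ((φ j).sem a) := by
    simp only [fPCL.sem, fPCL.sem_bigCoal _ _ hγ, DeMorganAlg.compl_finset_sup,
      DeMorganAlg.compl_finset_inf]
  have rhs : (fPCL.oplus (fPCL.bigOplus n fun j => .pil (.fnot (φ j)))
        (fPCL.closure (.pil (fPIL.bigConj n fun j => .fnot (φ j))))).sem γ =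
      (univ.sup fun j => γ.inf fun a => DeMorganAlg.compl ((φ j).sem a)) ⊔
        γ.sup fun a => univ.inf fun j => DeMorganAlg.compl ((φ j).sem a) := by
    simp only [fPCL.sem, fPCL.sem_bigOplus, fPCL.sem_closure_pil _ hγ, fPIL.sem_bigConj, fPIL.sem]
  rw [lhs, rhs, inf_coverings_sup_eq]

/-- for a finite nonempty index set `J = Fin (n+1)` and fPIL
formulas `φ j`, `¬(⊎_{j∈J} φ_j) ≡ (⊕_{j∈J} !φ_j) ⊕ ~(⋀f_{j∈J} !φ_j)` as fPCL
formulas. -/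
theorem fpcl_neg_bigCoal {P : Type} [Fintype P] (n : ℕ) (φ : Fin (n + 1) → fPIL P) :
    pclEquiv (.cneg (fPCL.bigCoal n fun j => .pil (φ j)))
      (.oplus (fPCL.bigOplus n fun j => .pil (.fnot (φ j)))
        (fPCL.closure (.pil (fPIL.bigConj n fun j => .fnot (φ j))))) :=
  fpcl_neg_bigCoal_general n φ
end
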